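/- arXiv:1212.3956 — 5 statements merged into one kernel-verified Lean document; each statement's English description precedes it below -/
import Mathlib

section
/- Let n and k be natural numbers and let v : Fin k → (Fin n → ℤ) be a finite family of integer vectors. Then the set M = {m : Fin n → ℤ | ∀ i, 0 ≤ ∑ j, m j * v i j} is a finitely generated additive submonoid of Fin n → ℤ (i.e., as an AddSubmonoid it satisfies AddSubmonoid.FG). -/
/-!
Write a lattice point as `m = a - b` with `a, b ∈ ℕⁿ` and record the slacks `s i = ⟪m, v i⟫ ∈ ℕ`.
The triples `(a, b, s)` are cut out of `ℕⁿ × ℕⁿ × ℕᵏ` by linear equations, i.e. they form the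
equalizer of two additive maps, which is finitely generated by Dickson's lemma
(`AddSubmonoid.fg_eqLocusM`); the dual cone is its image under `(a, b, s) ↦ a - b`.
-/

namespace AddMonoidHom

variable {ι κ : Type*}

def nonnegLocus (φ : (ι → ℤ) →+ (κ → ℤ)) : AddSubmonoid (ι → ℤ) where
  carrier := {m | 0 ≤ φ m}
  zero_mem' := by simp
  add_mem' {a b} ha hb := by simpa using add_nonneg ha hb

theorem nonnegLocus_fg [Finite ι] [Finite κ] (φ : (ι → ℤ) →+ (κ → ℤ)) : φ.nonnegLocus.FG := by
  let castι := AddMonoidHom.compLeft (Nat.castAddMonoidHom ℤ) ι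
  let diff : (ι → ℕ) × (ι → ℕ) × (κ → ℕ) →+ (ι → ℤ) :=
    castι.comp (fst _ _) - castι.comp ((fst _ _).comp (snd _ _))
  let slack : (ι → ℕ) × (ι → ℕ) × (κ → ℕ) →+ (κ → ℤ) :=
    (AddMonoidHom.compLeft (Nat.castAddMonoidHom ℤ) κ).comp ((snd _ _).comp (snd _ _))
  suffices φ.nonnegLocus = ((φ.comp diff).eqLocusM slack).map diff from
    this ▸ (AddSubmonoid.fg_eqLocusM _ _).map diff
  ext m
  constructor
  · intro (hm : 0 ≤ φ m)
    have hdiff : diff (fun j => (m j).toNat, fun j => (-m j).toNat, fun i => (φ m i).toNat) = m :=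
      funext fun j => Int.toNat_sub_toNat_neg (m j)
    refine ⟨_, ?_, hdiff⟩
    rw [SetLike.mem_coe, mem_eqLocusM, comp_apply, hdiff]
    exact funext fun i => (Int.toNat_of_nonneg (hm i)).symm
  · rintro ⟨w, hw, rfl⟩
    change 0 ≤ φ (diff w)
    rw [← comp_apply, mem_eqLocusM.mp hw]
    exact fun i => Int.natCast_nonneg _

end AddMonoidHom

/-- Gordan's lemma: the monoid of lattice points of the dual of the rational
polyhedral cone generated by the vectors `v i` is a finitely generated monoid. -/
theorem gordan_dual_cone_fg (n k : ℕ) (v : Fin k → (Fin n → ℤ)) :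
    AddSubmonoid.FG
      ({ carrier := {m : Fin n → ℤ | ∀ i, 0 ≤ ∑ j, m j * v i j},
         zero_mem' := by
           intro i
           simp
         add_mem' := by
           intro a b ha hb i
           have : ∑ j, (a + b) j * v i j = (∑ j, a j * v i j) + ∑ j, b j * v i j := by
             rw [← Finset.sum_add_distrib]
             exact Finset.sum_congr rfl fun j _ => by simp [add_mul]
           rw [this]
           exact add_nonneg (ha i) (hb i) } : AddSubmonoid (Fin n → ℤ)) :=
  (Matrix.vecMulLinear (Matrix.of v).transpose).toAddMonoidHom.nonnegLocus_fg
end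

section
/- Let R be a commutative ring, ι a finite type, A a commutative additive group, w : ι → A a family of weights, and B ≤ A a subgroup of finite index. Grade the polynomial ring S = MvPolynomial ι R by assigning to a monomial with exponent vector c : ι →₀ ℕ the degree ∑ i, c i • w i. Then the R-subalgebra S_B of S consisting of all polynomials p such that every exponent vector c in the support of p has degree ∑ i, c i • w i lying in B is a finitely generated R-algebra (Subalgebra.FG). -/
open MvPolynomial


section CoxAux

variable {R : Type*} [CommRing R] {ι : Type*} [Fintype ι]
    {A : Type*} [AddCommGroup A]

/-- Degree of an exponent vector. -/
def coxDeg (w : ι → A) (c : ι →₀ ℕ) : A := ∑ i, c i • w i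

lemma coxDeg_add (w : ι → A) (a b : ι →₀ ℕ) :
    coxDeg w (a + b) = coxDeg w a + coxDeg w b := by
  unfold coxDeg
  rw [← Finset.sum_add_distrib]
  exact Finset.sum_congr rfl fun i _ => by simp [add_smul]

lemma coxDeg_single (w : ι → A) (i : ι) (n : ℕ) :
    coxDeg w (Finsupp.single i n) = n • w i := by
  unfold coxDeg
  rw [Finset.sum_eq_single i]
  · simp
  · intro j _ hj
    simp [Finsupp.single_apply, Ne.symm hj]
  · intro h
    exact absurd (Finset.mem_univ i) h

lemma coxMonomial_mem_adjoin (w : ι → A) (B : AddSubgroup A) [B.FiniteIndex]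
    (s : Set (MvPolynomial ι R))
    (hE : ∀ i, monomial (Finsupp.single i B.index) (1 : R) ∈ s)
    (hF : ∀ c : ι →₀ ℕ, (∀ i, c i < B.index) → coxDeg w c ∈ B →
      monomial c (1 : R) ∈ s) :
    ∀ (N : ℕ) (c : ι →₀ ℕ), (∑ i, c i) ≤ N → coxDeg w c ∈ B →
      monomial c (1 : R) ∈ Algebra.adjoin R s := by
  classical
  have hind : B.index ≠ 0 := AddSubgroup.FiniteIndex.index_ne_zero
  intro N
  induction N with
  | zero =>
    intro c hc hB
    refine Algebra.subset_adjoin (hF c (fun i => ?_) hB)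
    have h0 : c i ≤ ∑ j, c j := Finset.single_le_sum (f := fun j => c j)
      (fun j _ => Nat.zero_le _) (Finset.mem_univ i)
    omega
  | succ N ih =>
    intro c hc hB
    by_cases h : ∀ i, c i < B.index
    · exact Algebra.subset_adjoin (hF c h hB)
    · push_neg at h
      obtain ⟨i, hi⟩ := h
      set c' : ι →₀ ℕ := c - Finsupp.single i B.index with hc'
      have hle : Finsupp.single i B.index ≤ c := by
        intro j
        rcases eq_or_ne i j with rfl | hij
        · simpa using hi
        · simp [Finsupp.single_apply, hij]
      have hsplit : Finsupp.single i B.index + c' = c := add_tsub_cancel_of_le hle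
      have hsum : (∑ j, c' j) ≤ N := by
        have h1 : (∑ j, (Finsupp.single i B.index + c') j) = ∑ j, c j := by
          rw [hsplit]
        have h2 : (∑ j, (Finsupp.single i B.index + c') j)
            = (∑ j, (Finsupp.single i B.index) j) + ∑ j, c' j := by
          rw [← Finset.sum_add_distrib]; rfl
        have h3 : (∑ j, (Finsupp.single i B.index) j) = B.index := by
          rw [Finset.sum_eq_single i]
          · simp
          · intro j _ hj; simp [Finsupp.single_apply, Ne.symm hj]
          · intro h; exact absurd (Finset.mem_univ i) h
        omega
      have hdeg : coxDeg w c' ∈ B := by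
        have h1 : coxDeg w c = B.index • w i + coxDeg w c' := by
          rw [← hsplit, coxDeg_add, coxDeg_single]
        have h2 : coxDeg w c' = coxDeg w c - B.index • w i := by
          rw [h1]; abel
        rw [h2]
        exact B.sub_mem hB (AddSubgroup.nsmul_index_mem B (w i))
      have hmul : (monomial c (1 : R))
          = monomial (Finsupp.single i B.index) 1 * monomial c' 1 := by
        rw [monomial_mul, hsplit, one_mul]
      rw [hmul]
      exact mul_mem (Algebra.subset_adjoin (hE i)) (ih c' hsum hdeg)

end CoxAux

/-- The `B`-restricted Cox ring, i.e. the subalgebra of the `A`-graded polynomial ring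
`R[(Z_i)_{i ∈ ι}]` (with `deg Z_i = w i`) consisting of the elements all of whose
monomials have degree in the subgroup `B` of finite index, is an
`R`-algebra of finite type. -/
theorem restrictedCoxRing_fg (R : Type*) [CommRing R] (ι : Type*) [Fintype ι]
    (A : Type*) [AddCommGroup A] (w : ι → A) (B : AddSubgroup A) [B.FiniteIndex] :
    Subalgebra.FG
      ({ carrier := {p : MvPolynomial ι R |
            ∀ c ∈ p.support, (∑ i, c i • w i : A) ∈ B},
         zero_mem' := by
           intro c hc
           simp at hc
         one_mem' := by
           intro c hc
           have h1 : (1 : MvPolynomial ι R) = MvPolynomial.monomial 0 1 := by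
             simp [MvPolynomial.monomial_zero']
           have : c = 0 := by
             have := MvPolynomial.support_monomial_subset (h1 ▸ hc)
             simpa using this
           subst this
           simpa using B.zero_mem
         add_mem' := by
           classical
           intro p q hp hq c hc
           rcases Finset.mem_union.mp (MvPolynomial.support_add hc) with h | h
           · exact hp c h
           · exact hq c h
         mul_mem' := by
           classical
           intro p q hp hq c hc
           have hc' := MvPolynomial.support_mul p q hc
           rcases Finset.mem_add.mp hc' with ⟨a, ha, b, hb, rfl⟩
           have : (∑ i, (a + b) i • w i : A) = (∑ i, a i • w i) + ∑ i, b i • w i := by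
             rw [← Finset.sum_add_distrib]
             exact Finset.sum_congr rfl fun i _ => by simp [add_smul]
           rw [this]
           exact B.add_mem (hp a ha) (hq b hb)
         algebraMap_mem' := by
           intro r c hc
           have h1 : (algebraMap R (MvPolynomial ι R)) r = MvPolynomial.monomial 0 r := by
             rw [MvPolynomial.algebraMap_eq, MvPolynomial.C_apply]
           have : c = 0 := by
             have := MvPolynomial.support_monomial_subset (h1 ▸ hc)
             simpa using this
           subst this
           simpa using B.zero_mem } : Subalgebra R (MvPolynomial ι R)) := by
  classical
  let E : Finset (MvPolynomial ι R) :=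
    Finset.univ.image fun i : ι => monomial (Finsupp.single i B.index) (1 : R)
  let Fc : Finset (ι →₀ ℕ) :=
    Finset.univ.image fun f : ι → Fin B.index =>
      Finsupp.equivFunOnFinite.symm fun i => (f i : ℕ)
  let F : Finset (MvPolynomial ι R) :=
    (Fc.filter fun c => coxDeg w c ∈ B).image fun c => monomial c (1 : R)
  refine ⟨E ∪ F, le_antisymm (Algebra.adjoin_le ?_) ?_⟩
  · -- adjoin ≤ T
    intro x hx
    rw [Finset.coe_union, Set.mem_union] at hx
    rcases hx with hx | hx
    · obtain ⟨i, _, rfl⟩ := Finset.mem_image.mp (Finset.mem_coe.mp hx)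
      intro c hc
      have hc1 : c = Finsupp.single i B.index := by
        simpa using MvPolynomial.support_monomial_subset hc
      subst hc1
      have : coxDeg w (Finsupp.single i B.index) ∈ B := by
        rw [coxDeg_single]
        exact AddSubgroup.nsmul_index_mem B (w i)
      exact this
    · obtain ⟨d, hd, rfl⟩ := Finset.mem_image.mp (Finset.mem_coe.mp hx)
      have hdB : coxDeg w d ∈ B := (Finset.mem_filter.mp hd).2
      intro c hc
      have hc1 : c = d := by
        simpa using MvPolynomial.support_monomial_subset hc
      subst hc1
      exact hdB
  · -- T ≤ adjoin
    intro p hp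
    have hp' : ∀ c ∈ p.support, coxDeg w c ∈ B := hp
    rw [MvPolynomial.as_sum p]
    refine Subalgebra.sum_mem _ fun v hv => ?_
    have hvB : coxDeg w v ∈ B := hp' v hv
    have h1 : (monomial v (MvPolynomial.coeff v p) : MvPolynomial ι R)
        = MvPolynomial.C (MvPolynomial.coeff v p) * monomial v 1 := by
      rw [MvPolynomial.C_mul_monomial, mul_one]
    rw [h1]
    refine mul_mem ?_ ?_
    · rw [← MvPolynomial.algebraMap_eq]
      exact Subalgebra.algebraMap_mem _ _
    · refine coxMonomial_mem_adjoin w B _ ?_ ?_ (∑ i, v i) v le_rfl hvB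
      · intro i
        exact Finset.mem_coe.mpr <| Finset.mem_union_left _ <|
          Finset.mem_image.mpr ⟨i, Finset.mem_univ i, rfl⟩
      · intro c hcn hcB
        refine Finset.mem_coe.mpr <| Finset.mem_union_right _ <|
          Finset.mem_image.mpr ⟨c, Finset.mem_filter.mpr ⟨?_, hcB⟩, rfl⟩
        refine Finset.mem_image.mpr ⟨fun i => ⟨c i, hcn i⟩, Finset.mem_univ _, ?_⟩
        ext i
        simp [Finsupp.equivFunOnFinite]
end

section
/- Every finitely generated additive commutative monoid is finitely presented: if M is an additive commutative monoid with AddMonoid.FG M, then there exist n : ℕ, a surjective additive monoid homomorphism f : (Fin n → ℕ) →+ M, and a finite set S of pairs of elements of Fin n → ℕ such that the kernel congruence AddCon.ker f is the additive congruence generated by S (i.e., AddCon.ker f = addConGen (fun x y => (x, y) ∈ S)). -/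
/-!
A congruence `c` on a commutative monoid `M` is recovered from the ideal of `ℤ[M]` spanned by
the binomials `single a 1 - single b 1` with `c a b`: that ideal lies in the kernel of
`ℤ[M] → ℤ[M ⧸ c]`, and a binomial lies in this kernel exactly when `c a b`. When `M` is
finitely generated, `ℤ[M]` is a finitely generated `ℤ`-algebra, hence Noetherian, so finitely
many of the binomials span the ideal, and their pairs generate `c`.
-/

open AddMonoidAlgebra

noncomputable def AddMonoidAlgebra.binomial (R : Type*) {M : Type*} [CommRing R] [AddCommMonoid M]
    (a b : M) : R[M] :=
  single a 1 - single b 1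

namespace AddCon

variable {R M : Type*} [CommRing R] [Nontrivial R] [AddCommMonoid M]

theorem binomial_mem_ker_mapDomainRingHom_mk'_iff (c : AddCon M) {a b : M} :
    binomial R a b ∈ RingHom.ker (mapDomainRingHom R c.mk') ↔ c a b := by
  rw [RingHom.mem_ker, binomial, map_sub, sub_eq_zero]
  simp only [mapDomainRingHom_apply, mapDomain_single, single_left_inj one_ne_zero]
  exact c.eq

theorem addConGen_of_binomial_mem_span {s : Set (M × M)} {a b : M}
    (h : binomial R a b ∈ Ideal.span ((fun p => binomial R p.1 p.2) '' s)) :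
    addConGen (fun x y => (x, y) ∈ s) a b := by
  set c := addConGen fun x y => (x, y) ∈ s
  have hspan_le_ker :
      Ideal.span ((fun p => binomial R p.1 p.2) '' s) ≤ RingHom.ker (mapDomainRingHom R c.mk') :=
    Ideal.span_le.mpr <| Set.image_subset_iff.mpr fun p hp =>
      (binomial_mem_ker_mapDomainRingHom_mk'_iff c).mpr (AddConGen.Rel.of _ _ hp)
  exact (binomial_mem_ker_mapDomainRingHom_mk'_iff c).mp (hspan_le_ker h)

theorem exists_finset_eq_addConGen_of_isNoetherianRing [IsNoetherianRing R[M]] (c : AddCon M) :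
    ∃ S : Finset (M × M), c = addConGen fun x y => (x, y) ∈ S := by
  classical
  obtain ⟨t, ht, hspan⟩ := (Submodule.fg_span_iff_fg_span_finset_subset _).mp
    (IsNoetherian.noetherian
      (Ideal.span ((fun p => binomial R p.1 p.2) '' {p : M × M | c p.1 p.2})))
  obtain ⟨S, hSc, rfl⟩ := Finset.subset_set_image_iff.mp ht
  refine ⟨S, le_antisymm (fun a b hab => addConGen_of_binomial_mem_span (R := R) ?_) ?_⟩
  · rw [Ideal.span, ← Finset.coe_image, ← hspan]
    exact Submodule.subset_span ⟨(a, b), hab, rfl⟩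
  · exact addConGen_le.mpr fun x y hxy => hSc hxy

end AddCon

theorem AddCon.exists_finset_eq_addConGen {M : Type*} [AddCommMonoid M] [AddMonoid.FG M]
    (c : AddCon M) : ∃ S : Finset (M × M), c = addConGen fun x y => (x, y) ∈ S :=
  have : IsNoetherianRing ℤ[M] := Algebra.FiniteType.isNoetherianRing ℤ ℤ[M]
  c.exists_finset_eq_addConGen_of_isNoetherianRing (R := ℤ)

/-- Rédei's theorem: every finitely generated commutative monoid is finitely presented.
That is, `M` is the quotient of a finitely generated free commutative monoid `Fin n → ℕ`
by a congruence generated by finitely many relations. -/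
theorem redei_finitely_presented (M : Type*) [AddCommMonoid M] [AddMonoid.FG M] :
    ∃ (n : ℕ) (f : (Fin n → ℕ) →+ M), Function.Surjective f ∧
      ∃ S : Finset ((Fin n → ℕ) × (Fin n → ℕ)),
        AddCon.ker f = addConGen (fun x y => (x, y) ∈ S) := by
  obtain ⟨n, f, hf⟩ :=
    AddSubmonoid.fg_iff_exists_fin_addMonoidHom.mp (AddMonoid.FG.fg_top (M := M))
  exact ⟨n, f, AddMonoidHom.mrange_eq_top.mp hf, (AddCon.ker f).exists_finset_eq_addConGen⟩
end

section
/- Let R be a commutative ring and M an additive cancellative commutative monoid that is torsion-free (for every x : M and n : ℕ with 0 < n, n • x = 0 implies x = 0). Then every idempotent element e of AddMonoidAlgebra R M is of the form AddMonoidAlgebra.single 0 r for some idempotent r of R; in other words, all idempotents of AddMonoidAlgebra R M lie in the image of the canonical algebra map from R. -/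
/-!
Let `Γ` be the Grothendieck group of `M` modulo its torsion and `π : M →+ Γ` the canonical map;
torsion-freeness of `M` says exactly that `π m = 0` only for `m = 0`. (`π` need not be injective,
as `n • x = n • y` does not force `x = y`, so `k[M]` itself need not be a domain.) Since `Γ` is a torsion-free
abelian group, `k[Γ]` is a domain for every domain `k`, so an idempotent of `S[Γ]` reduces to `0`
or `1` modulo every prime of `S`: its coefficients in nonzero degrees are nilpotent. Applied to the
image of `e` under the coaction `R[M] → R[M][Γ]`, `single m r ↦ single (π m) (single m r)`, this
shows that `e` differs from its constant term by a nilpotent. Finally `e` and its image under the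
augmentation `R[M] → R → R[M]` are idempotents differing by a nilpotent, hence equal.
-/

open AddMonoidAlgebra

theorem UniqueSums.of_isAddTorsionFree (G : Type*) [AddCommGroup G] [IsAddTorsionFree G] :
    UniqueSums G where
  uniqueAdd_of_nonempty {A B} hA hB := by
    classical
    -- `A` and `B` lie in a finitely generated subgroup, which is free abelian.
    let H := AddSubgroup.closure ((A ∪ B : Finset G) : Set G)
    have : AddGroup.FG H := (AddGroup.fg_iff_addSubgroup_fg H).mpr ⟨A ∪ B, rfl⟩
    have hAH : ∀ x ∈ A, x ∈ H := fun x hx => AddSubgroup.subset_closure (by simp [hx])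
    have hBH : ∀ y ∈ B, y ∈ H := fun y hy => AddSubgroup.subset_closure (by simp [hy])
    obtain ⟨a, ha, b, hb, hab⟩ := UniqueSums.uniqueAdd_of_nonempty
      (A := A.subtype (· ∈ H)) (B := B.subtype (· ∈ H))
      (let ⟨x, hx⟩ := hA; ⟨⟨x, hAH x hx⟩, Finset.mem_subtype.mpr hx⟩)
      (let ⟨y, hy⟩ := hB; ⟨⟨y, hBH y hy⟩, Finset.mem_subtype.mpr hy⟩)
    refine ⟨a, Finset.mem_subtype.mp ha, b, Finset.mem_subtype.mp hb, fun x y hx hy hxy => ?_⟩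
    have := hab (a := ⟨x, hAH x hx⟩) (b := ⟨y, hBH y hy⟩)
      (Finset.mem_subtype.mpr hx) (Finset.mem_subtype.mpr hy) (Subtype.ext hxy)
    exact ⟨congrArg Subtype.val this.1, congrArg Subtype.val this.2⟩

theorem Algebra.GrothendieckAddGroup.eq_zero_of_of_mem_torsion
    {M : Type*} [AddCancelCommMonoid M] (hM : ∀ (x : M) (n : ℕ), 0 < n → n • x = 0 → x = 0)
    {m : M} (h : of m ∈ AddCommGroup.torsion (GrothendieckAddGroup M)) : m = 0 := by
  obtain ⟨n, hn, hnm⟩ := IsOfFinAddOrder.exists_nsmul_eq_zero h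
  refine hM m n hn (of_injective ?_)
  rw [map_nsmul, hnm, map_zero]

namespace AddMonoidAlgebra

section Nilpotent

variable {S Γ : Type*} [CommRing S]

theorem isNilpotent_of_forall_isNilpotent_coeff [AddCommMonoid Γ] {x : AddMonoidAlgebra S Γ}
    (hx : ∀ g, IsNilpotent (x.coeff g)) : IsNilpotent x := by
  rw [← x.sum_coeff_single]
  refine isNilpotent_sum fun g _ => ?_
  obtain ⟨n, hn⟩ := hx g
  exact ⟨n, by rw [single_pow, hn, single_zero]⟩

theorem isNilpotent_coeff_of_isIdempotentElem [AddMonoid Γ] [UniqueSums Γ]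
    {x : AddMonoidAlgebra S Γ} (hx : IsIdempotentElem x) {g : Γ} (hg : g ≠ 0) :
    IsNilpotent (x.coeff g) := by
  rw [← mem_nilradical, nilradical_eq_sInf, Ideal.mem_sInf]
  intro P (hP : P.IsPrime)
  rw [← Ideal.Quotient.eq_zero_iff_mem, ← coeff_mapRingHom]
  rcases IsIdempotentElem.iff_eq_zero_or_one.mp (hx.map (mapRingHom Γ (Ideal.Quotient.mk P)))
    with h | h <;> rw [h]
  · rfl
  · rw [one_def, coeff_single, Finsupp.single_eq_of_ne hg]

theorem isNilpotent_sub_single_coeff_zero [AddCommMonoid Γ] [UniqueSums Γ]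
    {x : AddMonoidAlgebra S Γ} (hx : IsIdempotentElem x) :
    IsNilpotent (x - single 0 (x.coeff 0)) := by
  refine isNilpotent_of_forall_isNilpotent_coeff fun g => ?_
  rcases eq_or_ne g 0 with rfl | hg
  · simp
  · simpa [coeff_single, Finsupp.single_eq_of_ne hg] using
      isNilpotent_coeff_of_isIdempotentElem hx hg

end Nilpotent

section Coaction

variable {R M Γ : Type*} [CommRing R] [AddCommMonoid M] [AddCommMonoid Γ]

/-- The grading of `R[M]` by `π`, as the coaction `single m r ↦ single (π m) (single m r)`. -/
noncomputable def coaction (π : M →+ Γ) :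
    AddMonoidAlgebra R M →+* AddMonoidAlgebra (AddMonoidAlgebra R M) Γ :=
  curryRingEquiv.toRingHom.comp (mapDomainRingHom R (π.prod (AddMonoidHom.id M)))

theorem coaction_single (π : M →+ Γ) (m : M) (r : R) :
    coaction π (single m r) = single (π m) (single m r) := by
  simp [coaction]

theorem coaction_injective (π : M →+ Γ) : Function.Injective (coaction (R := R) π) :=
  curryRingEquiv.injective.comp (mapDomain_injective fun _ _ h => congrArg Prod.snd h)

theorem coeff_coeff_coaction [DecidableEq Γ] (π : M →+ Γ) (x : AddMonoidAlgebra R M) (g : Γ)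
    (m : M) : ((coaction π x).coeff g).coeff m = if π m = g then x.coeff m else 0 := by
  induction x using AddMonoidAlgebra.induction_linear with
  | zero => simp
  | add x y hx hy => simp [hx, hy, ite_add_ite]
  | single n r =>
    rw [coaction_single]
    obtain rfl | hnm := eq_or_ne n m
    · by_cases h : π n = g <;> simp [h, coeff_single]
    · by_cases h : π n = g <;> simp [h, coeff_single, Finsupp.single_eq_of_ne hnm.symm]

theorem coeff_zero_coaction {π : M →+ Γ} (hπ : ∀ m, π m = 0 → m = 0) (x : AddMonoidAlgebra R M) :
    (coaction π x).coeff 0 = single 0 (x.coeff 0) := by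
  classical
  ext m
  rw [coeff_coeff_coaction, coeff_single]
  by_cases hm : m = 0
  · simp [hm]
  · simp [hm, mt (hπ m) hm]

theorem isNilpotent_sub_single_coeff_zero_of_addMonoidHom [UniqueSums Γ] {π : M →+ Γ}
    (hπ : ∀ m, π m = 0 → m = 0) {e : AddMonoidAlgebra R M} (he : IsIdempotentElem e) :
    IsNilpotent (e - single 0 (e.coeff 0)) := by
  have hconst : single 0 (single 0 (e.coeff 0)) = coaction π (single 0 (e.coeff 0)) := by
    rw [coaction_single, π.map_zero]
  have h := isNilpotent_sub_single_coeff_zero (he.map (coaction π))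
  rw [coeff_zero_coaction hπ, hconst, ← map_sub] at h
  obtain ⟨n, hn⟩ := h
  exact ⟨n, coaction_injective π (by rw [map_pow, hn, map_zero])⟩

end Coaction

theorem exists_eq_single_zero_of_isNilpotent_sub {R M : Type*} [CommRing R] [AddCommMonoid M]
    {e : AddMonoidAlgebra R M} (he : IsIdempotentElem e)
    (hd : IsNilpotent (e - single 0 (e.coeff 0))) :
    ∃ r : R, IsIdempotentElem r ∧ e = single 0 r := by
  let ε : AddMonoidAlgebra R M →ₐ[R] R := lift R R M 1
  have hε : ∀ m r, ε (single m r) = r := by simp [ε]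
  let κ : AddMonoidAlgebra R M →+* AddMonoidAlgebra R M := singleZeroRingHom.comp ε.toRingHom
  have hκ : ∀ x, κ x = single 0 (ε x) := fun _ => rfl
  refine ⟨ε e, he.map ε, eq_of_isNilpotent_sub_of_isIdempotentElem he (he.map κ) ?_⟩
  have hsplit : e - κ e = (e - single 0 (e.coeff 0)) - κ (e - single 0 (e.coeff 0)) := by
    rw [map_sub κ, hκ (single 0 _), hε]
    abel
  rw [← hκ, hsplit]
  exact (Commute.all _ _).isNilpotent_sub hd (hd.map κ)

end AddMonoidAlgebra

/-- For a torsion-free cancellative commutative monoid `M`, every idempotent of the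
monoid algebra `R[M]` is a constant, i.e. of the form `single 0 r` for an idempotent
`r` of `R`. -/
theorem addMonoidAlgebra_idempotent_eq_single_zero (R : Type*) [CommRing R]
    (M : Type*) [AddCancelCommMonoid M]
    (hM : ∀ (x : M) (n : ℕ), 0 < n → n • x = 0 → x = 0)
    (e : AddMonoidAlgebra R M) (he : IsIdempotentElem e) :
    ∃ r : R, IsIdempotentElem r ∧ e = AddMonoidAlgebra.single 0 r := by
  let G := Algebra.GrothendieckAddGroup M
  have : UniqueSums (G ⧸ AddCommGroup.torsion G) := UniqueSums.of_isAddTorsionFree _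
  let π : M →+ G ⧸ AddCommGroup.torsion G :=
    (QuotientAddGroup.mk' _).comp Algebra.GrothendieckAddGroup.of
  have hπ : ∀ m, π m = 0 → m = 0 := fun m hm =>
    Algebra.GrothendieckAddGroup.eq_zero_of_of_mem_torsion hM
      ((QuotientAddGroup.eq_zero_iff _).mp hm)
  exact exists_eq_single_zero_of_isNilpotent_sub he
    (isNilpotent_sub_single_coeff_zero_of_addMonoidHom hπ he)
end

section
/- Let R be a commutative ring, G an additive commutative group, M' an additive submonoid of G, and u ∈ M'. Let M'' be the additive submonoid {x : G | ∃ k : ℕ, x + k • u ∈ M'} of G. Then there is an R-algebra isomorphism between AddMonoidAlgebra R M'' and the localization of AddMonoidAlgebra R M' away from the element AddMonoidAlgebra.single ⟨u, _⟩ (1 : R) (i.e., Localization.Away of the monomial χ^u). -/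
/-!
Every monomial of `R[M'']` becomes a monomial of `R[M']` after multiplication by a power of
`χ^u`, while `χ^u` is already invertible in `R[M'']` with inverse `χ^{-u}`. Since the inclusion
`R[M'] → R[M'']` is injective, this is exactly the universal property of `R[M'][1/χ^u]`.
-/

namespace AddMonoidAlgebra

variable {R M N : Type*} [CommSemiring R] [AddCommMonoid M] [AddCommMonoid N]

theorem isUnit_single_one_of_isAddUnit {a : N} (ha : IsAddUnit a) :
    IsUnit (single a (1 : R)) := by
  obtain ⟨b, hab⟩ := ha.exists_neg
  exact .of_mul_eq_one (single b 1) (by rw [single_mul_single, hab, one_mul]; rfl)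

theorem exists_mul_single_nsmul_eq_mapDomain (f : M →+ N) (u : M)
    (hf : ∀ n : N, ∃ k : ℕ, ∃ m : M, n + k • f u = f m) (z : R[N]) :
    ∃ (k : ℕ) (x : R[M]), z * single (k • f u) 1 = mapDomain f x := by
  induction z using AddMonoidAlgebra.induction with
  | zero => exact ⟨0, 0, by simp⟩
  | single_add a r z _ _ ih =>
    obtain ⟨k, x, hx⟩ := ih
    obtain ⟨l, m, hm⟩ := hf a
    refine ⟨l + k, single (m + k • u) r + x * single (l • u) 1, ?_⟩
    rw [add_mul, mapDomain_add, mapDomain_mul, mapDomain_single, mapDomain_single, ← hx,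
      map_add, map_nsmul, map_nsmul, ← hm, add_nsmul, add_assoc, single_mul_single, mul_one,
      mul_assoc, single_mul_single, mul_one, add_comm (l • f u)]

theorem isLocalizationAway_single_mapDomain (f : M →+ N) (hf : Function.Injective f) {u : M}
    (hu : IsAddUnit (f u)) (hsurj : ∀ n : N, ∃ k : ℕ, ∃ m : M, n + k • f u = f m) :
    letI := (mapDomainRingHom R f).toAlgebra
    IsLocalization.Away (single u (1 : R)) R[N] := by
  let := (mapDomainRingHom R f).toAlgebra
  have hmap (x : R[M]) : algebraMap R[M] R[N] x = mapDomain f x := rfl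
  refine .mk _ ?_ (fun z => ?_) (fun a b hab => ⟨0, ?_⟩)
  · rw [hmap, mapDomain_single]
    exact isUnit_single_one_of_isAddUnit hu
  · obtain ⟨k, x, hx⟩ := exists_mul_single_nsmul_eq_mapDomain f u hsurj z
    refine ⟨k, x, ?_⟩
    rw [hmap, hmap, mapDomain_single, single_pow, one_pow, hx]
  · rw [mapDomain_injective hf hab]

end AddMonoidAlgebra

/-- Inverting the monomial `χ^u` in the monoid algebra `R[M']` yields the monoid
algebra of the submonoid `M'' = {x | ∃ k, x + k • u ∈ M'}`. -/
theorem addMonoidAlgebra_localization_away_single (R : Type*) [CommRing R]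
    (G : Type*) [AddCommGroup G] (M' : AddSubmonoid G) (u : G) (hu : u ∈ M')
    (M'' : AddSubmonoid G)
    (hM'' : ∀ x : G, x ∈ M'' ↔ ∃ k : ℕ, x + k • u ∈ M') :
    Nonempty (AddMonoidAlgebra R M'' ≃ₐ[R]
      Localization.Away (AddMonoidAlgebra.single (⟨u, hu⟩ : M') (1 : R))) := by
  have hle : M' ≤ M'' := fun x hx => (hM'' x).2 ⟨0, by simpa using hx⟩
  let ι := AddSubmonoid.inclusion hle
  have hι_unit : IsAddUnit (ι ⟨u, hu⟩) :=
    .of_add_eq_zero ⟨-u, (hM'' _).2 ⟨1, by simp⟩⟩ (Subtype.ext (add_neg_cancel u))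
  have hι_surj (x : M'') : ∃ k : ℕ, ∃ m : M', x + k • ι ⟨u, hu⟩ = ι m := by
    obtain ⟨k, hk⟩ := (hM'' x).1 x.2
    exact ⟨k, ⟨_, hk⟩, rfl⟩
  let := (AddMonoidAlgebra.mapDomainRingHom R ι).toAlgebra
  have := AddMonoidAlgebra.isLocalizationAway_single_mapDomain (R := R) ι
    (AddSubmonoid.inclusion_injective hle) hι_unit hι_surj
  have : IsScalarTower R (AddMonoidAlgebra R M') (AddMonoidAlgebra R M'') :=
    .of_algebraMap_eq' (AddMonoidAlgebra.mapDomainAlgHom R R ι).comp_algebraMap.symm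
  exact ⟨((IsLocalization.algEquiv
    (Submonoid.powers (AddMonoidAlgebra.single (⟨u, hu⟩ : M') (1 : R))) (Localization.Away _)
    (AddMonoidAlgebra R M'')).restrictScalars R).symm⟩
end
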